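/- In a weak Hopf algebra H, for all h ∈ H: Δ(ε_t(h)) = h_{(1)}S(h_{(3)}) ⊗ ε_t(h_{(2)}) and Δ(ε_s(h)) = ε_s(h_{(2)}) ⊗ S(h_{(1)})h_{(3)}. -/

import Mathlib

open TensorProduct

structure WeakBialgebra (k H : Type*) [CommRing k] [Ring H] [Algebra k H] where
  comul : H →ₗ[k] H ⊗[k] H
  counit : H →ₗ[k] k
  coassoc : ∀ h : H, (TensorProduct.assoc k H H H) ((comul.rTensor H) (comul h)) =
      (comul.lTensor H) (comul h)
  counit_left : ∀ h : H, (TensorProduct.lid k H) ((counit.rTensor H) (comul h)) = h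
  counit_right : ∀ h : H, (TensorProduct.rid k H) ((counit.lTensor H) (comul h)) = h
  comul_mul : ∀ h g : H, comul (h * g) = comul h * comul g
  weak_unit_left : (comul.lTensor H) (comul 1) =
      (Algebra.TensorProduct.map (AlgHom.id k H)
        (Algebra.TensorProduct.includeLeft : H →ₐ[k] H ⊗[k] H)) (comul 1) *
      (Algebra.TensorProduct.includeRight : (H ⊗[k] H) →ₐ[k] H ⊗[k] (H ⊗[k] H)) (comul 1)
  weak_unit_right : (comul.lTensor H) (comul 1) =
      (Algebra.TensorProduct.includeRight : (H ⊗[k] H) →ₐ[k] H ⊗[k] (H ⊗[k] H)) (comul 1) *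
      (Algebra.TensorProduct.map (AlgHom.id k H)
        (Algebra.TensorProduct.includeLeft : H →ₐ[k] H ⊗[k] H)) (comul 1)
  weak_counit₁ : ∀ h g l : H, counit (h * g * l) =
      (LinearMap.mul' k k) ((TensorProduct.map counit counit)
        ((h ⊗ₜ[k] (1 : H)) * comul g * ((1 : H) ⊗ₜ[k] l)))
  weak_counit₂ : ∀ h g l : H, counit (h * g * l) =
      (LinearMap.mul' k k) ((TensorProduct.map counit counit)
        ((h ⊗ₜ[k] (1 : H)) * (TensorProduct.comm k H H) (comul g) * ((1 : H) ⊗ₜ[k] l)))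

namespace WeakBialgebra

variable {k H : Type*} [CommRing k] [Ring H] [Algebra k H] (W : WeakBialgebra k H)

/-- The target map `ε_t(h) = ε(1_{(1)}h)1_{(2)}`. -/
noncomputable def εt : H →ₗ[k] H :=
  (TensorProduct.lid k H).toLinearMap ∘ₗ (W.counit.rTensor H) ∘ₗ
    (LinearMap.mulLeft k (W.comul 1)) ∘ₗ
    (Algebra.TensorProduct.includeLeft : H →ₐ[k] H ⊗[k] H).toLinearMap

/-- The source map `ε_s(h) = 1_{(1)}ε(h1_{(2)})`. -/
noncomputable def εs : H →ₗ[k] H :=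
  (TensorProduct.rid k H).toLinearMap ∘ₗ (W.counit.lTensor H) ∘ₗ
    (LinearMap.mulRight k (W.comul 1)) ∘ₗ
    (Algebra.TensorProduct.includeRight : H →ₐ[k] H ⊗[k] H).toLinearMap

/-- `ε̄_t(h) = ε(h1_{(1)})1_{(2)}`. -/
noncomputable def εt' : H →ₗ[k] H :=
  (TensorProduct.lid k H).toLinearMap ∘ₗ (W.counit.rTensor H) ∘ₗ
    (LinearMap.mulRight k (W.comul 1)) ∘ₗ
    (Algebra.TensorProduct.includeLeft : H →ₐ[k] H ⊗[k] H).toLinearMap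

/-- `ε̄_s(h) = ε(1_{(2)}h)1_{(1)}`. -/
noncomputable def εs' : H →ₗ[k] H :=
  (TensorProduct.rid k H).toLinearMap ∘ₗ (W.counit.lTensor H) ∘ₗ
    (LinearMap.mulLeft k (W.comul 1)) ∘ₗ
    (Algebra.TensorProduct.includeRight : H →ₐ[k] H ⊗[k] H).toLinearMap

end WeakBialgebra

/-- A weak Hopf algebra: a weak bialgebra with an antipode. -/
structure WeakHopf (k H : Type*) [CommRing k] [Ring H] [Algebra k H] where
  W : WeakBialgebra k H
  S : H →ₗ[k] H
  S_conv_id : ∀ h : H, (LinearMap.mul' k H) ((S.rTensor H) (W.comul h)) = W.εs h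
  id_conv_S : ∀ h : H, (LinearMap.mul' k H) ((S.lTensor H) (W.comul h)) = W.εt h
  S_conv_id_conv_S : ∀ h : H, (LinearMap.mul' k H) ((LinearMap.lTensor H (LinearMap.mul' k H))
      ((TensorProduct.map S (TensorProduct.map LinearMap.id S))
        ((W.comul.lTensor H) (W.comul h)))) = S h

/-!
In any weak bialgebra the relation `Δ²(1) = (1 ⊗ Δ(1))(Δ(1) ⊗ 1)` yields
`h₍₁₎ ⊗ ε_t(h₍₂₎) = 1₍₁₎h ⊗ 1₍₂₎` and `Δ(ε_t(h)) = 1₍₁₎ε_t(h) ⊗ 1₍₂₎`. With the antipode,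
`ε_t(h) = h₍₁₎S(h₍₂₎)`, so
`Δ(ε_t(h)) = 1₍₁₎h₍₁₎S(h₍₂₎) ⊗ 1₍₂₎ = h₍₁₎S(h₍₃₎) ⊗ ε_t(h₍₂₎)`.
The formula for `ε_s` is the mirror image.
-/

section

open LinearMap

variable {R A B : Type*} [CommSemiring R] [Semiring A] [Semiring B] [Algebra R A] [Algebra R B]

theorem TensorProduct.mul_tmul_one_eq_rTensor_mulRight (x : A ⊗[R] B) (a : A) :
    x * (a ⊗ₜ[R] (1 : B)) = (mulRight R a).rTensor B x := by
  rw [← mulRight_apply (R := R), mulRight_tmul, mulRight_one]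
  rfl

theorem TensorProduct.tmul_one_mul_eq_lTensor_mulLeft (b : B) (x : A ⊗[R] B) :
    ((1 : A) ⊗ₜ[R] b) * x = (mulLeft R b).lTensor A x := by
  rw [← mulLeft_apply (R := R), mulLeft_tmul, mulLeft_one]
  rfl

end

namespace WeakBialgebra

open LinearMap

variable {k H : Type*} [CommRing k] [Ring H] [Algebra k H] (W : WeakBialgebra k H)

theorem εt_eq_sum {s : Finset (H × H)} (hs : W.comul 1 = ∑ p ∈ s, p.1 ⊗ₜ[k] p.2) (x : H) :
    W.εt x = ∑ p ∈ s, W.counit (p.1 * x) • p.2 := by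
  simp only [εt, coe_comp, Function.comp_apply, AlgHom.toLinearMap_apply,
    Algebra.TensorProduct.includeLeft_apply, mulLeft_apply, hs, Finset.sum_mul,
    Algebra.TensorProduct.tmul_mul_tmul, mul_one, map_sum, rTensor_tmul, LinearEquiv.coe_coe,
    lid_tmul]

theorem εs_eq_sum {s : Finset (H × H)} (hs : W.comul 1 = ∑ p ∈ s, p.1 ⊗ₜ[k] p.2) (x : H) :
    W.εs x = ∑ p ∈ s, W.counit (x * p.2) • p.1 := by
  simp only [εs, coe_comp, Function.comp_apply, AlgHom.toLinearMap_apply,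
    Algebra.TensorProduct.includeRight_apply, mulRight_apply, hs, Finset.mul_sum,
    Algebra.TensorProduct.tmul_mul_tmul, one_mul, map_sum, lTensor_tmul, LinearEquiv.coe_coe,
    rid_tmul]

theorem lTensor_comul_comul_one_eq_sum {s : Finset (H × H)}
    (hs : W.comul 1 = ∑ p ∈ s, p.1 ⊗ₜ[k] p.2) :
    (W.comul.lTensor H) (W.comul 1) =
      ∑ r ∈ s, ∑ p ∈ s, p.1 ⊗ₜ[k] ((r.1 * p.2) ⊗ₜ[k] r.2) := by
  rw [W.weak_unit_right]
  conv_lhs => rw [hs]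
  simp only [map_sum, Algebra.TensorProduct.includeRight_apply, Algebra.TensorProduct.map_tmul,
    AlgHom.coe_id, id_eq, Algebra.TensorProduct.includeLeft_apply, Finset.sum_mul_sum,
    Algebra.TensorProduct.tmul_mul_tmul, one_mul, mul_one]

theorem rTensor_comul_comul_eq_assoc_symm (h : H) :
    (W.comul.rTensor H) (W.comul h) =
      (TensorProduct.assoc k H H H).symm ((W.comul.lTensor H) (W.comul h)) := by
  rw [← W.coassoc h, LinearEquiv.symm_apply_apply]

theorem lTensor_εt_comul (h : H) :
    (W.εt.lTensor H) (W.comul h) = W.comul 1 * (h ⊗ₜ[k] 1) := by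
  obtain ⟨s, hs⟩ := TensorProduct.exists_finset (W.comul 1)
  obtain ⟨t, ht⟩ := TensorProduct.exists_finset (W.comul h)
  let g : H ⊗[k] H →ₗ[k] H :=
    (TensorProduct.rid k H).toLinearMap ∘ₗ W.counit.lTensor H ∘ₗ mulRight k (W.comul h)
  have g_tmul (a b : H) : g (a ⊗ₜ b) = ∑ q ∈ t, W.counit (b * q.2) • (a * q.1) := by
    simp only [g, coe_comp, Function.comp_apply, mulRight_apply, ht, Finset.mul_sum,
      Algebra.TensorProduct.tmul_mul_tmul, map_sum, lTensor_tmul, LinearEquiv.coe_coe, rid_tmul]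
  have g_comp_comul : g ∘ₗ W.comul = mulRight k h := by
    ext x
    simp only [g, coe_comp, Function.comp_apply, mulRight_apply, LinearEquiv.coe_coe,
      ← W.comul_mul, W.counit_right]
  -- `Θ (a ⊗ b ⊗ c) = g (a ⊗ b) ⊗ c`, evaluated on the two expressions for `Δ²(1)`
  let Θ := g.rTensor H ∘ₗ (TensorProduct.assoc k H H H).symm.toLinearMap
  calc (W.εt.lTensor H) (W.comul h) = Θ ((W.comul.lTensor H) (W.comul 1)) := by
        have : W.comul h = W.comul 1 * W.comul h := by rw [← W.comul_mul, one_mul]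
        rw [W.lTensor_comul_comul_one_eq_sum hs, this, hs, ht, Finset.sum_mul_sum]
        simp only [Algebra.TensorProduct.tmul_mul_tmul, map_sum, lTensor_tmul, W.εt_eq_sum hs,
          Θ, coe_comp, Function.comp_apply, LinearEquiv.coe_coe, TensorProduct.assoc_symm_tmul,
          rTensor_tmul, g_tmul, TensorProduct.tmul_sum, TensorProduct.sum_tmul,
          TensorProduct.tmul_smul, TensorProduct.smul_tmul', mul_assoc]
        exact (Finset.sum_congr rfl fun _ _ => Finset.sum_comm).trans Finset.sum_comm
    _ = ((g ∘ₗ W.comul).rTensor H) (W.comul 1) := by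
      rw [← W.coassoc 1, rTensor_comp_apply]
      simp only [Θ, coe_comp, Function.comp_apply, LinearEquiv.coe_coe,
        LinearEquiv.symm_apply_apply]
    _ = W.comul 1 * (h ⊗ₜ[k] 1) := by
      rw [g_comp_comul, TensorProduct.mul_tmul_one_eq_rTensor_mulRight]

theorem comul_εt (h : H) : W.comul (W.εt h) = W.comul 1 * (W.εt h ⊗ₜ[k] 1) := by
  obtain ⟨s, hs⟩ := TensorProduct.exists_finset (W.comul 1)
  let Λ : H ⊗[k] (H ⊗[k] H) →ₗ[k] H ⊗[k] H :=
    (TensorProduct.lid k (H ⊗[k] H)).toLinearMap ∘ₗ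
      (W.counit ∘ₗ mulRight k h).rTensor (H ⊗[k] H)
  -- `Λ (a ⊗ b ⊗ c) = ε(a h) b ⊗ c`, evaluated on the two expressions for `Δ²(1)`
  calc W.comul (W.εt h) = Λ ((W.comul.lTensor H) (W.comul 1)) := by
        conv_rhs => rw [hs]
        simp only [W.εt_eq_sum hs, map_sum, map_smul, lTensor_tmul, Λ, coe_comp,
          Function.comp_apply, rTensor_tmul, LinearEquiv.coe_coe, TensorProduct.lid_tmul,
          mulRight_apply]
    _ = W.comul 1 * (W.εt h ⊗ₜ[k] 1) := by
      rw [W.lTensor_comul_comul_one_eq_sum hs, hs, Finset.sum_mul, W.εt_eq_sum hs]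
      simp only [map_sum, Λ, coe_comp, Function.comp_apply, rTensor_tmul, LinearEquiv.coe_coe,
        TensorProduct.lid_tmul, mulRight_apply, Algebra.TensorProduct.tmul_mul_tmul, mul_one,
        Finset.mul_sum, mul_smul_comm, TensorProduct.sum_tmul, TensorProduct.smul_tmul']

theorem rTensor_εs_comul (h : H) :
    (W.εs.rTensor H) (W.comul h) = ((1 : H) ⊗ₜ[k] h) * W.comul 1 := by
  obtain ⟨s, hs⟩ := TensorProduct.exists_finset (W.comul 1)
  obtain ⟨t, ht⟩ := TensorProduct.exists_finset (W.comul h)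
  let g : H ⊗[k] H →ₗ[k] H :=
    (TensorProduct.lid k H).toLinearMap ∘ₗ W.counit.rTensor H ∘ₗ mulLeft k (W.comul h)
  have g_tmul (a b : H) : g (a ⊗ₜ b) = ∑ q ∈ t, W.counit (q.1 * a) • (q.2 * b) := by
    simp only [g, coe_comp, Function.comp_apply, mulLeft_apply, ht, Finset.sum_mul,
      Algebra.TensorProduct.tmul_mul_tmul, map_sum, rTensor_tmul, LinearEquiv.coe_coe, lid_tmul]
  have g_comp_comul : g ∘ₗ W.comul = mulLeft k h := by
    ext x
    simp only [g, coe_comp, Function.comp_apply, mulLeft_apply, LinearEquiv.coe_coe,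
      ← W.comul_mul, W.counit_left]
  calc (W.εs.rTensor H) (W.comul h) = (g.lTensor H) ((W.comul.lTensor H) (W.comul 1)) := by
        have : W.comul h = W.comul h * W.comul 1 := by rw [← W.comul_mul, mul_one]
        rw [W.lTensor_comul_comul_one_eq_sum hs, this, hs, ht, Finset.sum_mul_sum]
        simp only [Algebra.TensorProduct.tmul_mul_tmul, map_sum, rTensor_tmul, W.εs_eq_sum hs,
          lTensor_tmul, g_tmul, TensorProduct.tmul_sum, TensorProduct.sum_tmul,
          TensorProduct.tmul_smul, TensorProduct.smul_tmul', mul_assoc]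
        exact Finset.sum_comm.trans (Finset.sum_congr rfl fun _ _ => Finset.sum_comm)
    _ = ((1 : H) ⊗ₜ[k] h) * W.comul 1 := by
      rw [← lTensor_comp_apply, g_comp_comul, TensorProduct.tmul_one_mul_eq_lTensor_mulLeft]

theorem comul_εs (h : H) : W.comul (W.εs h) = ((1 : H) ⊗ₜ[k] W.εs h) * W.comul 1 := by
  obtain ⟨s, hs⟩ := TensorProduct.exists_finset (W.comul 1)
  let Λ : (H ⊗[k] H) ⊗[k] H →ₗ[k] H ⊗[k] H :=
    (TensorProduct.rid k (H ⊗[k] H)).toLinearMap ∘ₗ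
      (W.counit ∘ₗ mulLeft k h).lTensor (H ⊗[k] H)
  calc W.comul (W.εs h) = Λ ((W.comul.rTensor H) (W.comul 1)) := by
        conv_rhs => rw [hs]
        simp only [W.εs_eq_sum hs, map_sum, map_smul, rTensor_tmul, Λ, coe_comp,
          Function.comp_apply, lTensor_tmul, LinearEquiv.coe_coe, TensorProduct.rid_tmul,
          mulLeft_apply]
    _ = ((1 : H) ⊗ₜ[k] W.εs h) * W.comul 1 := by
      rw [W.rTensor_comul_comul_eq_assoc_symm, W.lTensor_comul_comul_one_eq_sum hs, hs,
        Finset.mul_sum, W.εs_eq_sum hs]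
      simp only [map_sum, TensorProduct.assoc_symm_tmul, Λ, coe_comp, Function.comp_apply,
        lTensor_tmul, LinearEquiv.coe_coe, TensorProduct.rid_tmul, mulLeft_apply,
        Algebra.TensorProduct.tmul_mul_tmul, one_mul, Finset.sum_mul, smul_mul_assoc,
        TensorProduct.tmul_sum, TensorProduct.tmul_smul, TensorProduct.smul_tmul']
      exact Finset.sum_comm

end WeakBialgebra

namespace WeakHopf

open LinearMap

variable {k H : Type*} [CommRing k] [Ring H] [Algebra k H] (WH : WeakHopf k H)

theorem comul_εt (h : H) :
    WH.W.comul (WH.W.εt h) =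
      (WH.W.εt.lTensor H)
        ((rTensor H (mul' k H ∘ₗ lTensor H WH.S))
          ((TensorProduct.assoc k H H H).symm
            ((lTensor H (TensorProduct.comm k H H).toLinearMap)
              ((WH.W.comul.lTensor H) (WH.W.comul h))))) := by
  obtain ⟨t, ht⟩ := TensorProduct.exists_finset (WH.W.comul h)
  have shuffle (w : H ⊗[k] H) (z : H) :
      (WH.W.εt.lTensor H)
        ((rTensor H (mul' k H ∘ₗ lTensor H WH.S))
          ((TensorProduct.assoc k H H H).symm
            ((lTensor H (TensorProduct.comm k H H).toLinearMap)
              (TensorProduct.assoc k H H H (w ⊗ₜ z))))) =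
        (WH.W.εt.lTensor H) w * (WH.S z ⊗ₜ[k] 1) := by
    induction w using TensorProduct.induction_on with
    | zero => simp only [TensorProduct.zero_tmul, map_zero, zero_mul]
    | tmul x y =>
      simp [TensorProduct.assoc_tmul, TensorProduct.comm_tmul, TensorProduct.assoc_symm_tmul,
        mul'_apply]
    | add u v hu hv => simp only [TensorProduct.add_tmul, map_add, hu, hv, add_mul]
  calc WH.W.comul (WH.W.εt h) = WH.W.comul 1 * (WH.W.εt h ⊗ₜ[k] 1) := WH.W.comul_εt h
    _ = ∑ q ∈ t, WH.W.comul 1 * (q.1 ⊗ₜ[k] 1) * (WH.S q.2 ⊗ₜ[k] 1) := by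
      simp only [← WH.id_conv_S, ht, map_sum, lTensor_tmul, mul'_apply, TensorProduct.sum_tmul,
        Finset.mul_sum, mul_assoc, Algebra.TensorProduct.tmul_mul_tmul, mul_one]
    _ = ∑ q ∈ t, (WH.W.εt.lTensor H) (WH.W.comul q.1) * (WH.S q.2 ⊗ₜ[k] 1) := by
      simp only [WH.W.lTensor_εt_comul]
    _ = _ := by
      rw [← WH.W.coassoc h, ht]
      simp only [map_sum, rTensor_tmul, shuffle]

theorem comul_εs (h : H) :
    WH.W.comul (WH.W.εs h) =
      (WH.W.εs.rTensor H)
        ((lTensor H (mul' k H ∘ₗ rTensor H WH.S))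
          ((TensorProduct.assoc k H H H)
            ((rTensor H (TensorProduct.comm k H H).toLinearMap)
              ((WH.W.comul.rTensor H) (WH.W.comul h))))) := by
  obtain ⟨t, ht⟩ := TensorProduct.exists_finset (WH.W.comul h)
  have shuffle (z : H) (w : H ⊗[k] H) :
      (WH.W.εs.rTensor H)
        ((lTensor H (mul' k H ∘ₗ rTensor H WH.S))
          ((TensorProduct.assoc k H H H)
            ((rTensor H (TensorProduct.comm k H H).toLinearMap)
              ((TensorProduct.assoc k H H H).symm (z ⊗ₜ w))))) =
        ((1 : H) ⊗ₜ[k] WH.S z) * (WH.W.εs.rTensor H) w := by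
    induction w using TensorProduct.induction_on with
    | zero => simp only [TensorProduct.tmul_zero, map_zero, mul_zero]
    | tmul x y =>
      simp [TensorProduct.assoc_tmul, TensorProduct.comm_tmul, TensorProduct.assoc_symm_tmul,
        mul'_apply]
    | add u v hu hv => simp only [TensorProduct.tmul_add, map_add, hu, hv, mul_add]
  calc WH.W.comul (WH.W.εs h) = ((1 : H) ⊗ₜ[k] WH.W.εs h) * WH.W.comul 1 := WH.W.comul_εs h
    _ = ∑ q ∈ t, ((1 : H) ⊗ₜ[k] WH.S q.1) * ((1 : H) ⊗ₜ[k] q.2) * WH.W.comul 1 := by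
      simp only [← WH.S_conv_id, ht, map_sum, rTensor_tmul, mul'_apply, TensorProduct.tmul_sum,
        Finset.sum_mul, Algebra.TensorProduct.tmul_mul_tmul, one_mul]
    _ = ∑ q ∈ t, ((1 : H) ⊗ₜ[k] WH.S q.1) * (WH.W.εs.rTensor H) (WH.W.comul q.2) := by
      simp only [WH.W.rTensor_εs_comul, mul_assoc]
    _ = _ := by
      rw [WH.W.rTensor_comul_comul_eq_assoc_symm, ht]
      simp only [map_sum, lTensor_tmul, shuffle]

end WeakHopf

/-- In a weak Hopf algebra: `Δ(ε_t(h)) = h₍₁₎S(h₍₃₎) ⊗ ε_t(h₍₂₎)` and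
`Δ(ε_s(h)) = ε_s(h₍₂₎) ⊗ S(h₍₁₎)h₍₃₎`. -/
theorem weakHopf_comul_target_source
    {k H : Type*} [CommRing k] [Ring H] [Algebra k H] (WH : WeakHopf k H) (h : H) :
    WH.W.comul (WH.W.εt h) =
      (LinearMap.lTensor H WH.W.εt)
        ((LinearMap.rTensor H ((LinearMap.mul' k H) ∘ₗ (LinearMap.lTensor H WH.S)))
          ((TensorProduct.assoc k H H H).symm
            ((LinearMap.lTensor H (TensorProduct.comm k H H).toLinearMap)
              ((WH.W.comul.lTensor H) (WH.W.comul h))))) ∧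
    WH.W.comul (WH.W.εs h) =
      (LinearMap.rTensor H WH.W.εs)
        ((LinearMap.lTensor H ((LinearMap.mul' k H) ∘ₗ (LinearMap.rTensor H WH.S)))
          ((TensorProduct.assoc k H H H)
            ((LinearMap.rTensor H (TensorProduct.comm k H H).toLinearMap)
              ((WH.W.comul.rTensor H) (WH.W.comul h))))) :=
  ⟨WH.comul_εt h, WH.comul_εs h⟩
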